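/- Let A be an anti-flexible algebra, E a vector space containing A as a subspace, and V a complement of A in E, so E = A⊕V. Let Extd(E,A) denote the set of equivalence classes of anti-flexible algebra structures on E such that the canonical injection i: A→E or the canonical projection p: E→A (with respect to the decomposition E = A⊕V) is an algebra homomorphism, where two structures on E are equivalent if there is an algebra isomorphism between them whose restriction to A is the identity. Let HA(V,A) be the disjoint union of the set of type (a1) extending data and the set of type (a2) extending data of A through V, modulo the equivalence under which two data are identified exactly when there exist linear maps r: V→A and s: V→V with s bijective such that (a,x) ↦ (a + r(x), s(x)) is an algebra isomorphism between the corresponding unified products. Then the map Ψ: HA(V,A) → Extd(E,A) sending the class of a type (a1) datum to the class of A #_θ V and the class of a type (a2) datum to the class of A_σ # V is well defined and bijective. -/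

import Mathlib

/-! An isomorphism of `A × V` restricting to the identity on `A` is exactly a map
`(a, x) ↦ (a + r x, s x)` with `s` bijective, so two extending data are equivalent precisely
when their unified products are equivalent structures on `E`; this makes `Ψ` well defined and
injective. For surjectivity, a structure on `E` for which the projection (resp. the injection)
is an algebra map is the unified product of the type (a1) (resp. (a2)) datum formed by its
blocks with respect to `E = A ⊕ V`. -/

open TensorProduct LinearMap

namespace AntiFlexible

section Basic

variable (K : Type*) [Field K] [CharZero K]
variable (M N P : Type*)
variable [AddCommGroup M] [Module K M] [AddCommGroup N] [Module K N] [AddCommGroup P] [Module K P]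

/-- The flip map `τ : M ⊗ N → N ⊗ M`. -/
noncomputable def τ : M ⊗[K] N →ₗ[K] N ⊗[K] M := (TensorProduct.comm K M N).toLinearMap

/-- `τ₁₃ : (M ⊗ N) ⊗ P → (P ⊗ N) ⊗ M`, exchanging the outer tensor factors. -/
noncomputable def τ₁₃ : (M ⊗[K] N) ⊗[K] P →ₗ[K] (P ⊗[K] N) ⊗[K] M :=
  (TensorProduct.assoc K P N M).symm.toLinearMap ∘ₗ
    (lTensor P (τ K M N)) ∘ₗ (TensorProduct.comm K (M ⊗[K] N) P).toLinearMap

/-- The reassociator `M ⊗ (N ⊗ P) → (M ⊗ N) ⊗ P`. -/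
noncomputable def α : M ⊗[K] (N ⊗[K] P) →ₗ[K] (M ⊗[K] N) ⊗[K] P :=
  (TensorProduct.assoc K M N P).symm.toLinearMap

/-- The antisymmetrizer `id - τ` on `M ⊗ M`. -/
noncomputable def ω : M ⊗[K] M →ₗ[K] M ⊗[K] M := LinearMap.id - τ K M M

end Basic

section Structures

variable {K : Type*} [Field K] [CharZero K]
variable {A H V : Type*}
variable [AddCommGroup A] [Module K A] [AddCommGroup H] [Module K H]
variable [AddCommGroup V] [Module K V]

/-- Anti-flexible algebra: `(ab)c - a(bc) = (cb)a - c(ba)`. -/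
def IsAFAlgebra (m : A →ₗ[K] A →ₗ[K] A) : Prop :=
  ∀ a b c, m (m a b) c - m a (m b c) = m (m c b) a - m c (m b a)

/-- The coassociativity defect `(Δ ⊗ id)Δ - (id ⊗ Δ)Δ`, viewed in `(A ⊗ A) ⊗ A`. -/
noncomputable def coassocDefect (Δ : A →ₗ[K] A ⊗[K] A) : A →ₗ[K] (A ⊗[K] A) ⊗[K] A :=
  (rTensor A Δ) ∘ₗ Δ - (α K A A A) ∘ₗ (lTensor A Δ) ∘ₗ Δ

/-- Anti-flexible coalgebra: the coassociativity defect is `τ₁₃`-invariant. -/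
def IsAFCoalgebra (Δ : A →ₗ[K] A ⊗[K] A) : Prop :=
  ∀ a, coassocDefect Δ a = τ₁₃ K A A A (coassocDefect Δ a)

/-- Anti-flexible bialgebra. -/
def IsAFBialgebra (m : A →ₗ[K] A →ₗ[K] A) (Δ : A →ₗ[K] A ⊗[K] A) : Prop :=
  IsAFAlgebra m ∧ IsAFCoalgebra Δ ∧
  (∀ a b, Δ (m a b) + τ K A A (Δ (m b a)) =
      rTensor A (m b) (τ K A A (Δ a)) + lTensor A (m.flip a) (τ K A A (Δ b))
      + rTensor A (m.flip b) (Δ a) + lTensor A (m a) (Δ b)) ∧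
  (∀ a b, ω K A (lTensor A (m.flip b) (Δ a) - rTensor A (m b) (Δ a)
      - lTensor A (m.flip a) (Δ b) + rTensor A (m a) (Δ b)) = 0)

/-- `V` is a bimodule over the anti-flexible algebra `(H, m)` via `tr = ▷` and `tl = ◁`. -/
def IsAFBimodule (m : H →ₗ[K] H →ₗ[K] H)
    (tr : H →ₗ[K] V →ₗ[K] V) (tl : V →ₗ[K] H →ₗ[K] V) : Prop :=
  (∀ x y v, tr (m x y) v - tr x (tr y v) = tl (tl v y) x - tl v (m y x)) ∧
  (∀ x y v, tl (tr x v) y - tr x (tl v y) = tl (tr y v) x - tr y (tl v x))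

/-- `V` is a bicomodule over the anti-flexible coalgebra `(H, Δ)` via `φ` and `ψ`. -/
def IsAFBicomodule (Δ : H →ₗ[K] H ⊗[K] H)
    (φ : V →ₗ[K] H ⊗[K] V) (ψ : V →ₗ[K] V ⊗[K] H) : Prop :=
  (∀ v, rTensor V Δ (φ v) - α K H H V (lTensor H φ (φ v))
      = τ₁₃ K V H H (rTensor H ψ (ψ v) - α K V H H (lTensor V Δ (ψ v)))) ∧
  (∀ v, rTensor H φ (ψ v) - α K H V H (lTensor H ψ (φ v))
      = τ₁₃ K H V H (rTensor H φ (ψ v) - α K H V H (lTensor H ψ (φ v))))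

/-- Anti-flexible Hopf bimodule over `(H, m, Δ)`, with conditions (HM1)-(HM3). -/
def IsAFHopfBimodule (m : H →ₗ[K] H →ₗ[K] H) (Δ : H →ₗ[K] H ⊗[K] H)
    (tr : H →ₗ[K] V →ₗ[K] V) (tl : V →ₗ[K] H →ₗ[K] V)
    (φ : V →ₗ[K] H ⊗[K] V) (ψ : V →ₗ[K] V ⊗[K] H) : Prop :=
  IsAFBimodule m tr tl ∧ IsAFBicomodule Δ φ ψ ∧
  -- (HM1)
  (∀ x v, φ (tr x v) + τ K V H (ψ (tl v x))
      = lTensor H (tr x) (φ v) + lTensor H (tl.flip x) (τ K V H (ψ v))) ∧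
  -- (HM2)
  (∀ x v, ψ (tr x v) + τ K H V (φ (tl v x))
      = rTensor H (tr.flip v) (Δ x) + lTensor V (m x) (ψ v)
      + lTensor V (m.flip x) (τ K H V (φ v)) + rTensor H (tl v) (τ K H H (Δ x))) ∧
  -- (HM3)
  (∀ x v, rTensor H (tr x) (ψ v) - rTensor H (tl v) (Δ x) - lTensor V (m.flip x) (ψ v)
      = τ K H V (- lTensor H (tl.flip x) (φ v) + rTensor V (m x) (φ v)
        + lTensor H (tr.flip v) (Δ x)))

/-- `A` is a braided anti-flexible bialgebra over `(H, mH, ΔH)`: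
an anti-flexible algebra and coalgebra in the category of anti-flexible Hopf bimodules,
satisfying (BB1) and (BB2). -/
def IsBraidedAFBialgebra (mA : A →ₗ[K] A →ₗ[K] A) (ΔA : A →ₗ[K] A ⊗[K] A)
    (mH : H →ₗ[K] H →ₗ[K] H) (ΔH : H →ₗ[K] H ⊗[K] H)
    (tr : H →ₗ[K] A →ₗ[K] A) (tl : A →ₗ[K] H →ₗ[K] A)
    (φ : A →ₗ[K] H ⊗[K] A) (ψ : A →ₗ[K] A ⊗[K] H) : Prop :=
  IsAFAlgebra mA ∧ IsAFCoalgebra ΔA ∧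
  IsAFHopfBimodule mH ΔH tr tl φ ψ ∧
  -- H-bimodule algebra
  (∀ x a b, mA (tr x a) b - tr x (mA a b) = tl (mA b a) x - mA b (tl a x)) ∧
  (∀ x a b, mA a (tr x b) - mA (tl a x) b = mA b (tr x a) - mA (tl b x) a) ∧
  -- H-bimodule coalgebra
  (∀ x b, ΔA (tr x b) + τ K A A (ΔA (tl b x))
      = lTensor A (tl.flip x) (τ K A A (ΔA b)) + lTensor A (tr x) (ΔA b)) ∧
  (∀ x b, ω K A (rTensor A (tr x) (ΔA b) - lTensor A (tl.flip x) (ΔA b)) = 0) ∧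
  -- H-bicomodule algebra
  (∀ a b, φ (mA a b) + τ K A H (ψ (mA b a))
      = lTensor H (mA a) (φ b) + lTensor H (mA.flip a) (τ K A H (ψ b))) ∧
  (∀ a b, lTensor H (mA.flip b) (φ a) - lTensor H (mA.flip a) (φ b)
      = τ K A H (rTensor H (mA a) (ψ b) - rTensor H (mA b) (ψ a))) ∧
  -- H-bicomodule coalgebra
  (∀ a, rTensor A φ (ΔA a) - α K H A A (lTensor H ΔA (φ a))
      = τ₁₃ K A A H (rTensor H ΔA (ψ a) - α K A A H (lTensor A ψ (ΔA a)))) ∧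
  (∀ a, rTensor A ψ (ΔA a) - α K A H A (lTensor A φ (ΔA a))
      = τ₁₃ K A H A (rTensor A ψ (ΔA a) - α K A H A (lTensor A φ (ΔA a)))) ∧
  -- (BB1)
  (∀ a b, ΔA (mA a b) + τ K A A (ΔA (mA b a))
      = rTensor A (mA.flip b) (ΔA a) + rTensor A (mA b) (τ K A A (ΔA a))
      + lTensor A (mA a) (ΔA b) + lTensor A (mA.flip a) (τ K A A (ΔA b))
      + rTensor A (tr.flip b) (φ a) + rTensor A (tl b) (τ K A H (ψ a))
      + lTensor A (tl a) (ψ b) + lTensor A (tr.flip a) (τ K H A (φ b))) ∧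
  -- (BB2)
  (∀ a b, ω K A (lTensor A (mA.flip b) (ΔA a) - rTensor A (mA b) (ΔA a)
        - lTensor A (mA.flip a) (ΔA b) + rTensor A (mA a) (ΔA b))
      + ω K A (lTensor A (tr.flip b) (ψ a) - rTensor A (tl b) (φ a)
        - lTensor A (tr.flip a) (ψ b) + rTensor A (tl a) (φ b)) = 0)

/-- The (cocycle) cross product multiplication on `A × H`:
`(a,x)(b,y) = (ab + x⇀b + a↼y + σ(x,y), xy + x◁b + a▷y + θ(a,b))`,
where `tr = ⇀`, `tl = ↼`, `sr = ▷`, `sl = ◁`. -/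
noncomputable def prodMul (mA : A →ₗ[K] A →ₗ[K] A) (mH : H →ₗ[K] H →ₗ[K] H)
    (tr : H →ₗ[K] A →ₗ[K] A) (tl : A →ₗ[K] H →ₗ[K] A)
    (sr : A →ₗ[K] H →ₗ[K] H) (sl : H →ₗ[K] A →ₗ[K] H)
    (σ : H →ₗ[K] H →ₗ[K] A) (θ : A →ₗ[K] A →ₗ[K] H) :
    (A × H) →ₗ[K] (A × H) →ₗ[K] (A × H) :=
  ((mA ∘ₗ fst K A H).compl₂ (fst K A H) + (tr ∘ₗ snd K A H).compl₂ (fst K A H)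
    + (tl ∘ₗ fst K A H).compl₂ (snd K A H)
    + (σ ∘ₗ snd K A H).compl₂ (snd K A H)).compr₂ (inl K A H)
  + ((mH ∘ₗ snd K A H).compl₂ (snd K A H) + (sl ∘ₗ snd K A H).compl₂ (fst K A H)
    + (sr ∘ₗ fst K A H).compl₂ (snd K A H)
    + (θ ∘ₗ fst K A H).compl₂ (fst K A H)).compr₂ (inr K A H)

/-- The (cycle) cross coproduct comultiplication on `A × H`:
`Δ(a) = Δ_A(a) + φ(a) + ψ(a) + P(a)` and `Δ(x) = Δ_H(x) + ρ(x) + γ(x) + Q(x)`. -/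
noncomputable def prodComul (ΔA : A →ₗ[K] A ⊗[K] A) (ΔH : H →ₗ[K] H ⊗[K] H)
    (φ : A →ₗ[K] H ⊗[K] A) (ψ : A →ₗ[K] A ⊗[K] H)
    (ρ : H →ₗ[K] A ⊗[K] H) (γ : H →ₗ[K] H ⊗[K] A)
    (P : A →ₗ[K] H ⊗[K] H) (Q : H →ₗ[K] A ⊗[K] A) :
    (A × H) →ₗ[K] (A × H) ⊗[K] (A × H) :=
  (TensorProduct.map (inl K A H) (inl K A H)) ∘ₗ ΔA ∘ₗ fst K A H
  + (TensorProduct.map (inr K A H) (inl K A H)) ∘ₗ φ ∘ₗ fst K A H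
  + (TensorProduct.map (inl K A H) (inr K A H)) ∘ₗ ψ ∘ₗ fst K A H
  + (TensorProduct.map (inr K A H) (inr K A H)) ∘ₗ P ∘ₗ fst K A H
  + (TensorProduct.map (inr K A H) (inr K A H)) ∘ₗ ΔH ∘ₗ snd K A H
  + (TensorProduct.map (inl K A H) (inr K A H)) ∘ₗ ρ ∘ₗ snd K A H
  + (TensorProduct.map (inr K A H) (inl K A H)) ∘ₗ γ ∘ₗ snd K A H
  + (TensorProduct.map (inl K A H) (inl K A H)) ∘ₗ Q ∘ₗ snd K A H

/-- The linear map `(a, x) ↦ (a + r(x), s(x))` on `A × V`. -/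
noncomputable def phiRS (r : V →ₗ[K] A) (s : V →ₗ[K] V) : (A × V) →ₗ[K] (A × V) :=
  (fst K A V + r ∘ₗ snd K A V).prod (s ∘ₗ snd K A V)

end Structures

end AntiFlexible

open AntiFlexible

section Stmt13

variable {K A : Type*} (V : Type*) [Field K] [CharZero K]
variable [AddCommGroup A] [Module K A] [AddCommGroup V] [Module K V]

/-- The multiplication on `A × V` obtained from a raw type (a1) datum
`d = (▷, ◁, θ, ·_V)`. -/
noncomputable def mulOfA1 (mA : A →ₗ[K] A →ₗ[K] A)
    (d : (A →ₗ[K] V →ₗ[K] V) × (V →ₗ[K] A →ₗ[K] V) × (A →ₗ[K] A →ₗ[K] V)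
      × (V →ₗ[K] V →ₗ[K] V)) :
    (A × V) →ₗ[K] (A × V) →ₗ[K] (A × V) :=
  prodMul mA d.2.2.2 0 0 d.1 d.2.1 0 d.2.2.1

/-- The multiplication on `A × V` obtained from a raw type (a2) datum
`d = (⇀, ↼, ◁, ▷, σ, ·_V)`. -/
noncomputable def mulOfA2 (mA : A →ₗ[K] A →ₗ[K] A)
    (d : (V →ₗ[K] A →ₗ[K] A) × (A →ₗ[K] V →ₗ[K] A) × (V →ₗ[K] A →ₗ[K] V)
      × (A →ₗ[K] V →ₗ[K] V) × (V →ₗ[K] V →ₗ[K] A) × (V →ₗ[K] V →ₗ[K] V)) :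
    (A × V) →ₗ[K] (A × V) →ₗ[K] (A × V) :=
  prodMul mA d.2.2.2.2.2 d.1 d.2.1 d.2.2.2.1 d.2.2.1 d.2.2.2.2.1 0

/-- The disjoint union of type (a1) and type (a2) extending data of `A`
through `V`. -/
def ExtDatum (mA : A →ₗ[K] A →ₗ[K] A) : Type _ :=
  {d : (A →ₗ[K] V →ₗ[K] V) × (V →ₗ[K] A →ₗ[K] V) × (A →ₗ[K] A →ₗ[K] V)
      × (V →ₗ[K] V →ₗ[K] V) // IsAFAlgebra (mulOfA1 V mA d)} ⊕
  {d : (V →ₗ[K] A →ₗ[K] A) × (A →ₗ[K] V →ₗ[K] A) × (V →ₗ[K] A →ₗ[K] V)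
      × (A →ₗ[K] V →ₗ[K] V) × (V →ₗ[K] V →ₗ[K] A) × (V →ₗ[K] V →ₗ[K] V) //
    IsAFAlgebra (mulOfA2 V mA d)}

/-- The unified product multiplication associated to an extending datum. -/
noncomputable def toMul (mA : A →ₗ[K] A →ₗ[K] A) :
    ExtDatum V mA → ((A × V) →ₗ[K] (A × V) →ₗ[K] (A × V)) :=
  Sum.elim (fun d => mulOfA1 V mA d.1) (fun d => mulOfA2 V mA d.1)

/-- Equivalence of extending data: the corresponding unified products are
isomorphic via `(a,x) ↦ (a + r(x), s(x))` for some `r` and bijective `s`. -/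
def DatumRel (mA : A →ₗ[K] A →ₗ[K] A) (D D' : ExtDatum V mA) : Prop :=
  ∃ (r : V →ₗ[K] A) (s : V →ₗ[K] V), Function.Bijective s ∧
    ∀ q q' : A × V,
      phiRS r s (toMul V mA D q q') = toMul V mA D' (phiRS r s q) (phiRS r s q')

/-- An anti-flexible algebra structure on `E = A × V` such that the canonical
injection or the canonical projection is an algebra homomorphism. -/
def GoodMul (mA : A →ₗ[K] A →ₗ[K] A)
    (μ : (A × V) →ₗ[K] (A × V) →ₗ[K] (A × V)) : Prop :=
  IsAFAlgebra μ ∧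
    ((∀ a b : A, μ (a, 0) (b, 0) = ((mA a b, 0) : A × V)) ∨
     (∀ q q' : A × V, (μ q q').1 = mA q.1 q'.1))

/-- Equivalence of algebra structures on `E`: isomorphic by an isomorphism
stabilizing `A`. -/
def StructRel (mA : A →ₗ[K] A →ₗ[K] A)
    (μ μ' : {μ : (A × V) →ₗ[K] (A × V) →ₗ[K] (A × V) // GoodMul V mA μ}) : Prop :=
  ∃ e : (A × V) ≃ₗ[K] (A × V),
    (∀ q q' : A × V, e (μ.1 q q') = μ'.1 (e q) (e q')) ∧
    (∀ a : A, e (a, 0) = ((a, 0) : A × V))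

section Blocks

variable {K A V : Type*} [Field K]
variable [AddCommGroup A] [Module K A] [AddCommGroup V] [Module K V]

noncomputable def datumA1OfMul (μ : (A × V) →ₗ[K] (A × V) →ₗ[K] (A × V)) :
    (A →ₗ[K] V →ₗ[K] V) × (V →ₗ[K] A →ₗ[K] V) × (A →ₗ[K] A →ₗ[K] V)
      × (V →ₗ[K] V →ₗ[K] V) :=
  ((μ.compl₁₂ (inl K A V) (inr K A V)).compr₂ (snd K A V),
   (μ.compl₁₂ (inr K A V) (inl K A V)).compr₂ (snd K A V),
   (μ.compl₁₂ (inl K A V) (inl K A V)).compr₂ (snd K A V),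
   (μ.compl₁₂ (inr K A V) (inr K A V)).compr₂ (snd K A V))

noncomputable def datumA2OfMul (μ : (A × V) →ₗ[K] (A × V) →ₗ[K] (A × V)) :
    (V →ₗ[K] A →ₗ[K] A) × (A →ₗ[K] V →ₗ[K] A) × (V →ₗ[K] A →ₗ[K] V)
      × (A →ₗ[K] V →ₗ[K] V) × (V →ₗ[K] V →ₗ[K] A) × (V →ₗ[K] V →ₗ[K] V) :=
  ((μ.compl₁₂ (inr K A V) (inl K A V)).compr₂ (fst K A V),
   (μ.compl₁₂ (inl K A V) (inr K A V)).compr₂ (fst K A V),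
   (μ.compl₁₂ (inr K A V) (inl K A V)).compr₂ (snd K A V),
   (μ.compl₁₂ (inl K A V) (inr K A V)).compr₂ (snd K A V),
   (μ.compl₁₂ (inr K A V) (inr K A V)).compr₂ (fst K A V),
   (μ.compl₁₂ (inr K A V) (inr K A V)).compr₂ (snd K A V))

end Blocks

section UnifiedProducts

variable {K A H V : Type*} [Field K]
variable [AddCommGroup A] [Module K A] [AddCommGroup H] [Module K H]
variable [AddCommGroup V] [Module K V]

@[simp]
lemma prodMul_apply (mA : A →ₗ[K] A →ₗ[K] A) (mH : H →ₗ[K] H →ₗ[K] H)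
    (tr : H →ₗ[K] A →ₗ[K] A) (tl : A →ₗ[K] H →ₗ[K] A)
    (sr : A →ₗ[K] H →ₗ[K] H) (sl : H →ₗ[K] A →ₗ[K] H)
    (σ : H →ₗ[K] H →ₗ[K] A) (θ : A →ₗ[K] A →ₗ[K] H) (p q : A × H) :
    prodMul mA mH tr tl sr sl σ θ p q
      = (mA p.1 q.1 + tr p.2 q.1 + tl p.1 q.2 + σ p.2 q.2,
         mH p.2 q.2 + sl p.2 q.1 + sr p.1 q.2 + θ p.1 q.1) := by
  simp only [prodMul, LinearMap.add_apply, LinearMap.compr₂_apply,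
    LinearMap.compl₂_apply, LinearMap.comp_apply, fst_apply, snd_apply,
    inl_apply, inr_apply, Prod.mk_add_mk, add_zero, zero_add]

@[simp]
lemma phiRS_apply (r : V →ₗ[K] A) (s : V →ₗ[K] V) (p : A × V) :
    phiRS r s p = (p.1 + r p.2, s p.2) := by
  simp [phiRS]

lemma phiRS_bijective_iff (r : V →ₗ[K] A) (s : V →ₗ[K] V) :
    Function.Bijective (phiRS r s) ↔ Function.Bijective s := by
  refine ⟨fun ⟨hinj, hsurj⟩ => ⟨fun x x' hx => ?_, fun y => ?_⟩,
    fun ⟨hinj, hsurj⟩ => ⟨fun p q h => ?_, fun q => ?_⟩⟩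
  · have : phiRS r s (r x' - r x, x) = phiRS r s (0, x') := by simp [hx]
    exact congrArg Prod.snd (hinj this)
  · obtain ⟨p, hp⟩ := hsurj (0, y)
    exact ⟨p.2, congrArg Prod.snd hp⟩
  · simp only [phiRS_apply, Prod.ext_iff] at h
    have h2 : p.2 = q.2 := hinj h.2
    exact Prod.ext (by simpa [h2] using h.1) h2
  · obtain ⟨x, hx⟩ := hsurj q.2
    exact ⟨(q.1 - r x, x), by simp [hx]⟩

lemma eq_phiRS_of_apply_inl {f : (A × V) →ₗ[K] (A × V)} (hf : ∀ a : A, f (a, 0) = (a, 0)) :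
    f = phiRS (fst K A V ∘ₗ f ∘ₗ inr K A V) (snd K A V ∘ₗ f ∘ₗ inr K A V) := by
  refine LinearMap.ext fun q => ?_
  have hq : f q = f (q.1, 0) + f (0, q.2) := by rw [← map_add, Prod.mk_add_mk]; simp
  rw [hq, hf]
  ext <;> simp

lemma toMul_goodMul (mA : A →ₗ[K] A →ₗ[K] A) (D : ExtDatum V mA) :
    GoodMul V mA (toMul V mA D) := by
  rcases D with ⟨d, hd⟩ | ⟨d, hd⟩
  · exact ⟨hd, Or.inr fun q q' => by simp [toMul, mulOfA1]⟩
  · exact ⟨hd, Or.inl fun a b => by simp [toMul, mulOfA2]⟩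

lemma mulOfA1_datumA1OfMul {mA : A →ₗ[K] A →ₗ[K] A} {μ : (A × V) →ₗ[K] (A × V) →ₗ[K] (A × V)}
    (hp : ∀ q q' : A × V, (μ q q').1 = mA q.1 q'.1) :
    mulOfA1 V mA (datumA1OfMul μ) = μ := by
  ext <;> simp [mulOfA1, datumA1OfMul, hp, Prod.mk_zero_zero]

lemma mulOfA2_datumA2OfMul {mA : A →ₗ[K] A →ₗ[K] A} {μ : (A × V) →ₗ[K] (A × V) →ₗ[K] (A × V)}
    (hi : ∀ a b : A, μ (a, 0) (b, 0) = (mA a b, 0)) :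
    mulOfA2 V mA (datumA2OfMul μ) = μ := by
  ext <;> simp [mulOfA2, datumA2OfMul, hi, Prod.mk_zero_zero]

lemma exists_toMul_eq {mA : A →ₗ[K] A →ₗ[K] A} {μ : (A × V) →ₗ[K] (A × V) →ₗ[K] (A × V)}
    (hμ : GoodMul V mA μ) : ∃ D : ExtDatum V mA, toMul V mA D = μ := by
  obtain ⟨hAF, hi | hp⟩ := hμ
  · have h := mulOfA2_datumA2OfMul hi
    exact ⟨.inr ⟨datumA2OfMul μ, h.symm ▸ hAF⟩, h⟩
  · have h := mulOfA1_datumA1OfMul hp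
    exact ⟨.inl ⟨datumA1OfMul μ, h.symm ▸ hAF⟩, h⟩

lemma structRel_equivalence (mA : A →ₗ[K] A →ₗ[K] A) : Equivalence (StructRel V mA) where
  refl _ := ⟨LinearEquiv.refl K _, fun _ _ => rfl, fun _ => rfl⟩
  symm := by
    rintro μ ν ⟨e, hmul, hA⟩
    refine ⟨e.symm, fun q q' => e.injective ?_, fun a => e.injective ?_⟩
    · simp [hmul]
    · simp [hA]
  trans := by
    rintro μ ν ρ ⟨e, he, hA⟩ ⟨f, hf, hA'⟩
    exact ⟨e.trans f, fun q q' => by simp [he, hf], fun a => by simp [hA, hA']⟩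

lemma structRel_iff {mA : A →ₗ[K] A →ₗ[K] A}
    {μ μ' : {μ : (A × V) →ₗ[K] (A × V) →ₗ[K] (A × V) // GoodMul V mA μ}} :
    StructRel V mA μ μ' ↔ ∃ (r : V →ₗ[K] A) (s : V →ₗ[K] V), Function.Bijective s ∧
      ∀ q q' : A × V, phiRS r s (μ.1 q q') = μ'.1 (phiRS r s q) (phiRS r s q') := by
  constructor
  · rintro ⟨e, hmul, hA⟩
    obtain ⟨r, s, he⟩ : ∃ r s, ⇑e = phiRS r s :=
      ⟨_, _, congrArg DFunLike.coe (eq_phiRS_of_apply_inl (f := e.toLinearMap) hA)⟩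
    rw [he] at hmul
    exact ⟨r, s, (phiRS_bijective_iff r s).1 (he ▸ e.bijective), hmul⟩
  · rintro ⟨r, s, hs, hmul⟩
    exact ⟨.ofBijective (phiRS r s) ((phiRS_bijective_iff r s).2 hs), hmul, fun a => by simp⟩

lemma datumRel_iff_structRel {mA : A →ₗ[K] A →ₗ[K] A} {D D' : ExtDatum V mA} :
    DatumRel V mA D D' ↔
      StructRel V mA ⟨toMul V mA D, toMul_goodMul mA D⟩ ⟨toMul V mA D', toMul_goodMul mA D'⟩ := by
  rw [structRel_iff]
  rfl

end UnifiedProducts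

theorem extending_problem_algebra_classification
    (mA : A →ₗ[K] A →ₗ[K] A) :
    ∃ Ψ : Quot (DatumRel V mA) → Quot (StructRel V mA),
      Function.Bijective Ψ ∧
      ∀ (D : ExtDatum V mA) (h : GoodMul V mA (toMul V mA D)),
        Ψ (Quot.mk _ D) = Quot.mk _ ⟨toMul V mA D, h⟩ := by
  refine ⟨Quot.lift (fun D => Quot.mk _ ⟨toMul V mA D, toMul_goodMul mA D⟩)
    (fun _ _ h => Quot.sound (datumRel_iff_structRel.1 h)), ⟨?_, ?_⟩, fun _ _ => rfl⟩
  · rintro ⟨D⟩ ⟨D'⟩ h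
    exact Quot.sound <| datumRel_iff_structRel.2 <|
      (structRel_equivalence mA).eqvGen_iff.1 (Quot.eq.1 h)
  · rintro ⟨μ, hμ⟩
    obtain ⟨D, rfl⟩ := exists_toMul_eq hμ
    exact ⟨Quot.mk _ D, rfl⟩

end Stmt13
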